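/- (Lower bound, Many-to-Many, average error.) Let K ≥ 2, let X be a countable type, and for each pair i, k ∈ {0,…,K−1} let D_{i,k} be a probability distribution (PMF) on X and f_{i,k} : X → Y a ground-truth translator into a countable type Y. Let Z be a measurable space and g : X → Z satisfy, for every k and every i ≠ j, d_TV(g♯D_{i,k}, g♯D_{j,k}) ≤ ε. Then for every measurable decoder h : Z → Y, (1/K²)·Σ_{i,k} Pr_{X∼D_{i,k}}(h(g(X)) ≠ f_{i,k}(X)) ≥ (1/(K²(K−1)))·Σ_{k} Σ_{i<j} d_TV(f_{i,k}♯D_{i,k}, f_{j,k}♯D_{j,k}) − ε/2. -/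

import Mathlib

/-!
Fix a target `k` and sources `i < j`. The triangle inequality through the decoded
distributions `(h ∘ g)♯D i k` and `(h ∘ g)♯D j k` bounds the total variation distance of the
target marginals by `err i k + err j k + ε`: each outer leg compares two maps applied to the
same sample, so it is at most the probability that they disagree, and the middle leg is at
most `ε` because pushing forward along `h` cannot increase total variation. Summing over
the pairs `i < j` charges every error `K - 1` times; summing over `k` and dividing by
`K² (K - 1)` gives the bound.
-/

open MeasureTheory

/-- Total variation distance between two measures: supremum over measurable events of
the absolute difference of the probabilities. -/
noncomputable def tvDist {α : Type*} [MeasurableSpace α] (P Q : Measure α) : ℝ :=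
  ⨆ E : {s : Set α // MeasurableSet s}, |(P E.1).toReal - (Q E.1).toReal|

open Finset

section TotalVariation

variable {α : Type*} [MeasurableSpace α]

lemma tvDist_comm (P Q : Measure α) : tvDist P Q = tvDist Q P := by
  simp only [tvDist, abs_sub_comm]

lemma tvDist_bddAbove (P Q : Measure α) [IsFiniteMeasure P] [IsFiniteMeasure Q] :
    BddAbove (Set.range fun E : {s : Set α // MeasurableSet s} =>
      |(P E.1).toReal - (Q E.1).toReal|) := by
  refine ⟨P.real Set.univ + Q.real Set.univ, ?_⟩
  rintro _ ⟨E, rfl⟩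
  calc |P.real E.1 - Q.real E.1| ≤ |P.real E.1| + |Q.real E.1| := abs_sub _ _
    _ = P.real E.1 + Q.real E.1 := by rw [abs_of_nonneg measureReal_nonneg,
        abs_of_nonneg measureReal_nonneg]
    _ ≤ P.real Set.univ + Q.real Set.univ :=
        add_le_add (measureReal_mono (Set.subset_univ _)) (measureReal_mono (Set.subset_univ _))

lemma le_tvDist (P Q : Measure α) [IsFiniteMeasure P] [IsFiniteMeasure Q]
    {E : Set α} (hE : MeasurableSet E) : |(P E).toReal - (Q E).toReal| ≤ tvDist P Q :=
  le_ciSup (tvDist_bddAbove P Q) ⟨E, hE⟩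

lemma tvDist_le {P Q : Measure α} {c : ℝ}
    (h : ∀ s, MeasurableSet s → |(P s).toReal - (Q s).toReal| ≤ c) : tvDist P Q ≤ c :=
  have : Nonempty {s : Set α // MeasurableSet s} := ⟨⟨∅, .empty⟩⟩
  ciSup_le fun E => h E.1 E.2

lemma tvDist_triangle (P Q R : Measure α) [IsFiniteMeasure P] [IsFiniteMeasure Q]
    [IsFiniteMeasure R] : tvDist P R ≤ tvDist P Q + tvDist Q R :=
  tvDist_le fun _ hs => (abs_sub_le _ _ _).trans <|
    add_le_add (le_tvDist P Q hs) (le_tvDist Q R hs)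

lemma tvDist_map_le {β : Type*} [MeasurableSpace β] (P Q : Measure α) [IsFiniteMeasure P]
    [IsFiniteMeasure Q] {h : α → β} (hh : Measurable h) :
    tvDist (P.map h) (Q.map h) ≤ tvDist P Q :=
  tvDist_le fun s hs => by
    rw [Measure.map_apply hh hs, Measure.map_apply hh hs]
    exact le_tvDist P Q (hh hs)

end TotalVariation

lemma measureReal_preimage_le_add_measureReal_ne {X Y : Type*} [MeasurableSpace X]
    (μ : Measure X) [IsFiniteMeasure μ] (f₀ f₁ : X → Y) (s : Set Y) :
    μ.real (f₀ ⁻¹' s) ≤ μ.real (f₁ ⁻¹' s) + μ.real {x | f₀ x ≠ f₁ x} := by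
  have hsub : f₀ ⁻¹' s ⊆ f₁ ⁻¹' s ∪ {x | f₀ x ≠ f₁ x} := fun x hx => by
    by_cases hx' : f₀ x = f₁ x
    · exact Or.inl (by rwa [Set.mem_preimage, ← hx'])
    · exact Or.inr hx'
  exact (measureReal_mono hsub).trans (measureReal_union_le _ _)

section Coupling

variable {X Y Z : Type*} [MeasurableSpace X] [MeasurableSpace Y] [MeasurableSpace Z]

lemma tvDist_map_le_measureReal_ne (μ : Measure X) [IsFiniteMeasure μ] {f₀ f₁ : X → Y}
    (hf₀ : Measurable f₀) (hf₁ : Measurable f₁) :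
    tvDist (μ.map f₀) (μ.map f₁) ≤ μ.real {x | f₀ x ≠ f₁ x} :=
  tvDist_le fun s hs => by
    have h₁₀ := measureReal_preimage_le_add_measureReal_ne μ f₁ f₀ s
    rw [show {x | f₁ x ≠ f₀ x} = {x | f₀ x ≠ f₁ x} from Set.ext fun _ => ne_comm] at h₁₀
    rw [Measure.map_apply hf₀ hs, Measure.map_apply hf₁ hs, ← measureReal_def,
      ← measureReal_def, abs_sub_le_iff]
    exact ⟨sub_le_iff_le_add'.mpr (measureReal_preimage_le_add_measureReal_ne μ f₀ f₁ s),
      sub_le_iff_le_add'.mpr h₁₀⟩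

lemma tvDist_map_le_measureReal_ne_add_tvDist_map (μ ν : Measure X) [IsFiniteMeasure μ]
    [IsFiniteMeasure ν] {f₀ f₁ : X → Y} {g : X → Z} {h : Z → Y} (hf₀ : Measurable f₀)
    (hf₁ : Measurable f₁) (hg : Measurable g) (hh : Measurable h) :
    tvDist (μ.map f₀) (ν.map f₁) ≤
      μ.real {x | h (g x) ≠ f₀ x} + ν.real {x | h (g x) ≠ f₁ x} +
        tvDist (μ.map g) (ν.map g) := by
  have hhg : Measurable (h ∘ g) := hh.comp hg
  have hdecode : tvDist (μ.map (h ∘ g)) (ν.map (h ∘ g)) ≤ tvDist (μ.map g) (ν.map g) := by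
    rw [← Measure.map_map hh hg, ← Measure.map_map hh hg]
    exact tvDist_map_le _ _ hh
  have hμ : tvDist (μ.map f₀) (μ.map (h ∘ g)) ≤ μ.real {x | h (g x) ≠ f₀ x} :=
    tvDist_comm (μ.map f₀) _ ▸ tvDist_map_le_measureReal_ne μ hhg hf₀
  have hν : tvDist (ν.map (h ∘ g)) (ν.map f₁) ≤ ν.real {x | h (g x) ≠ f₁ x} :=
    tvDist_map_le_measureReal_ne ν hhg hf₁
  linarith [tvDist_triangle (μ.map f₀) (μ.map (h ∘ g)) (ν.map f₁),
    tvDist_triangle (μ.map (h ∘ g)) (ν.map (h ∘ g)) (ν.map f₁)]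

end Coupling

lemma sum_filter_lt_add_eq {ι R : Type*} [Fintype ι] [LinearOrder ι] [CommRing R] (a : ι → R) :
    ∑ p ∈ univ.filter (fun p : ι × ι => p.1 < p.2), (a p.1 + a p.2) =
      ((Fintype.card ι : R) - 1) * ∑ i, a i := by
  have hswap : ∑ p ∈ univ.filter (fun p : ι × ι => p.1 < p.2), a p.2 =
      ∑ p ∈ univ.filter (fun p : ι × ι => p.2 < p.1), a p.1 :=
    sum_nbij' Prod.swap Prod.swap (by simp) (by simp) (by simp) (by simp) (by simp)
  have hsplit : univ.filter (fun p : ι × ι => p.1 ≠ p.2) =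
      univ.filter (fun p : ι × ι => p.1 < p.2) ∪ univ.filter (fun p : ι × ι => p.2 < p.1) := by
    ext p
    simpa only [mem_filter, mem_univ, true_and, mem_union] using ne_iff_lt_or_gt
  have hdisj : Disjoint (univ.filter (fun p : ι × ι => p.1 < p.2))
      (univ.filter (fun p : ι × ι => p.2 < p.1)) :=
    disjoint_filter.mpr fun _ _ hlt hgt => lt_asymm hlt hgt
  have hoff : ∑ p ∈ univ.filter (fun p : ι × ι => p.1 ≠ p.2), a p.1 =
      ((Fintype.card ι : R) - 1) * ∑ i, a i := by
    rw [sum_filter, Fintype.sum_prod_type, mul_sum]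
    refine sum_congr rfl fun i _ => ?_
    rw [← sum_filter, filter_ne, sum_const (b := a i), card_erase_of_mem (mem_univ i), card_univ,
      nsmul_eq_mul, Nat.cast_pred (Fintype.card_pos_iff.mpr ⟨i⟩)]
  rw [sum_add_distrib, hswap, ← sum_union hdisj, ← hsplit, hoff]

lemma sum_tvDist_map_le {ι X Y Z : Type*} [Fintype ι] [LinearOrder ι] [MeasurableSpace X]
    [MeasurableSpace Y] [MeasurableSpace Z] (μ : ι → Measure X) [∀ i, IsFiniteMeasure (μ i)]
    {f : ι → X → Y} {g : X → Z} {h : Z → Y} (hf : ∀ i, Measurable (f i)) (hg : Measurable g)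
    (hh : Measurable h) {ε : ℝ}
    (hε : ∀ i j, i < j → tvDist ((μ i).map g) ((μ j).map g) ≤ ε) :
    ∑ p ∈ univ.filter (fun p : ι × ι => p.1 < p.2),
        tvDist ((μ p.1).map (f p.1)) ((μ p.2).map (f p.2)) ≤
      ((Fintype.card ι : ℝ) - 1) * ∑ i, ((μ i).real {x | h (g x) ≠ f i x} + ε / 2) := by
  rw [← sum_filter_lt_add_eq]
  refine sum_le_sum fun p hp => ?_
  have hlt : p.1 < p.2 := (mem_filter.mp hp).2
  linarith [tvDist_map_le_measureReal_ne_add_tvDist_map (μ p.1) (μ p.2) (hf p.1) (hf p.2) hg hh,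
    hε p.1 p.2 hlt]

theorem many_to_many_avg_lower_bound_general {X Y Z : Type*}
    [MeasurableSpace X] [DiscreteMeasurableSpace X]
    [MeasurableSpace Y] [MeasurableSpace Z]
    (K : ℕ) (hK : 2 ≤ K)
    (D : Fin K → Fin K → PMF X) (f : Fin K → Fin K → X → Y) (g : X → Z) (ε : ℝ)
    (hg : ∀ k i j, i ≠ j →
      tvDist ((D i k).map g).toMeasure ((D j k).map g).toMeasure ≤ ε)
    {h : Z → Y} (hh : Measurable h) :
    (1 / (K : ℝ) ^ 2) * ∑ i : Fin K, ∑ k : Fin K,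
        ((D i k).toMeasure {x | h (g x) ≠ f i k x}).toReal
      ≥ (1 / ((K : ℝ) ^ 2 * ((K : ℝ) - 1))) * ∑ k : Fin K,
          ∑ p ∈ Finset.univ.filter (fun p : Fin K × Fin K => p.1 < p.2),
            tvDist ((D p.1 k).map (f p.1 k)).toMeasure
              ((D p.2 k).map (f p.2 k)).toMeasure
        - ε / 2 := by
  set err : Fin K → Fin K → ℝ := fun i k => (D i k).toMeasure.real {x | h (g x) ≠ f i k x}
  have htarget : ∀ k, ∑ p ∈ univ.filter (fun p : Fin K × Fin K => p.1 < p.2),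
      tvDist ((D p.1 k).map (f p.1 k)).toMeasure ((D p.2 k).map (f p.2 k)).toMeasure ≤
        ((K : ℝ) - 1) * ∑ i, (err i k + ε / 2) := fun k => by
    have := sum_tvDist_map_le (fun i => (D i k).toMeasure) (f := fun i => f i k)
      (fun _ => .of_discrete) .of_discrete hh fun i j hij => by
        simpa only [PMF.toMeasure_map _ _ Measurable.of_discrete] using hg k i j hij.ne
    simpa only [PMF.toMeasure_map _ _ Measurable.of_discrete, Fintype.card_fin] using this
  have hpairs : ∑ k, ∑ p ∈ univ.filter (fun p : Fin K × Fin K => p.1 < p.2),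
      tvDist ((D p.1 k).map (f p.1 k)).toMeasure ((D p.2 k).map (f p.2 k)).toMeasure ≤
        ((K : ℝ) - 1) * (∑ i, ∑ k, err i k + (K : ℝ) ^ 2 * (ε / 2)) :=
    calc _ ≤ ∑ k, ((K : ℝ) - 1) * ∑ i, (err i k + ε / 2) := sum_le_sum fun k _ => htarget k
      _ = _ := by
        rw [← mul_sum, sum_comm]
        simp only [sum_add_distrib, sum_const, card_univ, Fintype.card_fin, nsmul_eq_mul]
        ring
  have hK' : (0 : ℝ) < (K : ℝ) ^ 2 * ((K : ℝ) - 1) := by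
    have : (2 : ℝ) ≤ K := by exact_mod_cast hK
    exact mul_pos (by positivity) (by linarith)
  rw [ge_iff_le, sub_le_iff_le_add, one_div_mul_eq_div, div_le_iff₀ hK']
  refine hpairs.trans_eq ?_
  simp only [err, measureReal_def]
  field_simp

/-- Lower bound, Many-to-Many, average error. Here `D i k` is the marginal over source
sentences of the parallel corpus for translating language `i` into language `k`, and
`f i k` is the corresponding ground-truth translator. If `g` is an `ε`-universal language
mapping, then for any measurable decoder `h`, the average translation error over all
pairs `(i, k)` is at least `1/(K²(K-1))` times the sum over targets `k` and sources
`i < j` of the total variation distances of the target marginals, minus `ε / 2`. -/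
theorem many_to_many_avg_lower_bound {X Y Z : Type*}
    [Countable X] [MeasurableSpace X] [DiscreteMeasurableSpace X]
    [Countable Y] [MeasurableSpace Y] [DiscreteMeasurableSpace Y]
    [MeasurableSpace Z]
    (K : ℕ) (hK : 2 ≤ K)
    (D : Fin K → Fin K → PMF X) (f : Fin K → Fin K → X → Y) (g : X → Z) (ε : ℝ)
    (hg : ∀ k i j, i ≠ j →
      tvDist ((D i k).map g).toMeasure ((D j k).map g).toMeasure ≤ ε)
    {h : Z → Y} (hh : Measurable h) :
    (1 / (K : ℝ) ^ 2) * ∑ i : Fin K, ∑ k : Fin K,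
        ((D i k).toMeasure {x | h (g x) ≠ f i k x}).toReal
      ≥ (1 / ((K : ℝ) ^ 2 * ((K : ℝ) - 1))) * ∑ k : Fin K,
          ∑ p ∈ Finset.univ.filter (fun p : Fin K × Fin K => p.1 < p.2),
            tvDist ((D p.1 k).map (f p.1 k)).toMeasure
              ((D p.2 k).map (f p.2 k)).toMeasure
        - ε / 2 :=
  many_to_many_avg_lower_bound_general K hK D f g ε hg hh
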